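/- arXiv:1407.6545 — 5 statements merged into one kernel-verified Lean document; each statement's English description precedes it below -/
import Mathlib

section
/- For a random n×n matrix A that is the sum of r independent uniformly random n×n permutation matrices, the expectation of the m-th permanental sum perm_m(A) (the sum over all m×m submatrix permanents, equivalently the number of partial permutation patterns of size m counted with multiplicity in A) equals (1/(n!)^r) · C(n,m)^2 · m! · Σ_{m_1+⋯+m_r=m, m_i≥0} [m!/(m_1!⋯m_r!)] · (n−m_1)!⋯(n−m_r)!. -/
open Finset

/-- The n×n permutation matrix (over ℚ) of a permutation σ. -/
def permMatrix (n : ℕ) (σ : Equiv.Perm (Fin n)) : Matrix (Fin n) (Fin n) ℚ :=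
  fun i j => if σ j = i then 1 else 0

/-- The sum of the r permutation matrices in a tuple. -/
def sumPermMatrices (n r : ℕ) (σ : Fin r → Equiv.Perm (Fin n)) : Matrix (Fin n) (Fin n) ℚ :=
  ∑ i, permMatrix n (σ i)

/-- The m-th permanental sum: the sum over all m-subsets of rows and columns of the
permanent of the corresponding m×m submatrix.  Summing over all pairs of injections
`Fin m ↪ Fin n` counts each (row set, column set, bijection) exactly `m!` times. -/
noncomputable def permSum (n m : ℕ) (A : Matrix (Fin n) (Fin n) ℚ) : ℚ :=
  (∑ f : Fin m ↪ Fin n, ∑ g : Fin m ↪ Fin n, ∏ i, A (f i) (g i)) / (m.factorial : ℚ)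

open Function Nat

/-!
Expanding each entry of `A = P_{σ_1} + ⋯ + P_{σ_r}` and the product over a pair of injections
`f, g : Fin m ↪ Fin n` writes `∏ i, A (f i) (g i)` as a sum over colourings `c : Fin m → Fin r`
of the indicator that `σ_{c i}` sends `g i` to `f i` for every `i`. For fixed `f, g, c` the
constraints on different `σ_k` are independent, and the permutations of `Fin n` extending a
prescribed injection on the `v_k = #c⁻¹(k)` points of colour `k` number `(n - v_k)!`. Grouping the
colourings by their fibre sizes `v` contributes the multinomial coefficient `m! / ∏ v_k!`, which
is counted by orbit–stabilizer for the action of `Perm (Fin m)` on colourings.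
-/

lemma card_perm_comp_eq_of_injective {α β : Type*} [Fintype α] [DecidableEq α] [Fintype β]
    {f g : β → α} (hf : Injective f) (hg : Injective g) :
    Fintype.card {τ : Equiv.Perm α // τ ∘ g = f} = (Fintype.card α - Fintype.card β)! := by
  set e₀ := (Equiv.ofInjective g hg).symm.trans (Equiv.ofInjective f hf)
  have hext : ∀ τ : Equiv.Perm α, τ ∘ g = f ↔ ∀ x : Set.range g, τ x = e₀ x := fun τ => by
    rw [funext_iff, Set.forall_subtype_range_iff]
    simp [e₀]
  have hcompl : ∀ {h : β → α}, Injective h →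
      Fintype.card ↑(Set.range h)ᶜ = Fintype.card α - Fintype.card β := fun h => by
    rw [Fintype.card_compl_set, Set.card_range_of_injective h]
  calc Fintype.card {τ : Equiv.Perm α // τ ∘ g = f}
      = Fintype.card (↑(Set.range g)ᶜ ≃ ↑(Set.range f)ᶜ) :=
        Fintype.card_congr ((Equiv.subtypeEquivRight hext).trans (Equiv.Set.compl e₀))
    _ = (Fintype.card α - Fintype.card β)! := by
        rw [Fintype.card_equiv (Fintype.equivOfCardEq ((hcompl hg).trans (hcompl hf).symm)),
          hcompl hg]

section FiberCard

variable {ι κ : Type*} [Fintype ι] [DecidableEq κ]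

def fiberCard (c : ι → κ) (k : κ) : ℕ := #{i | c i = k}

lemma fiberCard_eq_card_subtype (c : ι → κ) (k : κ) :
    fiberCard c k = Fintype.card {i // c i = k} :=
  (Fintype.card_subtype _).symm

lemma sum_fiberCard [Fintype κ] (c : ι → κ) : ∑ k, fiberCard c k = Fintype.card ι :=
  (card_eq_sum_card_fiberwise fun i _ => mem_univ (c i)).symm

lemma fiberCard_comp_perm (c : ι → κ) (g : Equiv.Perm ι) :
    fiberCard (c ∘ g) = fiberCard c := by
  ext k
  simp only [fiberCard_eq_card_subtype]
  exact Fintype.card_congr (g.subtypeEquiv fun _ => Iff.rfl)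

lemma exists_perm_comp_eq_of_fiberCard_eq {c c' : ι → κ} (h : fiberCard c = fiberCard c') :
    ∃ g : Equiv.Perm ι, c' ∘ g = c := by
  have e : ∀ k, {i // c i = k} ≃ {i // c' i = k} := fun k =>
    Fintype.equivOfCardEq <| by simp only [← fiberCard_eq_card_subtype, h]
  exact ⟨Equiv.ofFiberEquiv e, funext (Equiv.ofFiberEquiv_map e)⟩

lemma exists_fiberCard_eq [Fintype κ] {v : κ → ℕ} (hv : ∑ k, v k = Fintype.card ι) :
    ∃ c : ι → κ, fiberCard c = v := by
  obtain ⟨e⟩ : Nonempty (ι ≃ Σ k, Fin (v k)) :=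
    Fintype.card_eq.mp <| by simp [hv]
  refine ⟨Sigma.fst ∘ e, funext fun k => ?_⟩
  rw [fiberCard_eq_card_subtype, ← Fintype.card_fin (v k)]
  exact Fintype.card_congr ((e.subtypeEquiv fun _ => Iff.rfl).trans (Equiv.sigmaSubtype k))

lemma card_perm_comp_eq_card_stabilizer [DecidableEq ι] {c₀ c : ι → κ} {g₀ : Equiv.Perm ι}
    (h : c₀ ∘ g₀ = c) :
    Fintype.card {g : Equiv.Perm ι // c₀ ∘ g = c} =
      Fintype.card {g : Equiv.Perm ι // c₀ ∘ g = c₀} :=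
  Fintype.card_congr <| (Equiv.subtypeEquiv (Equiv.mulRight g₀) fun g => by
    rw [← h, Equiv.coe_mulRight, Equiv.Perm.coe_mul, ← comp_assoc]
    exact g₀.surjective.injective_comp_right.eq_iff.symm).symm

lemma card_fiberCard_eq_multinomial [Fintype κ] [DecidableEq ι] {v : κ → ℕ}
    (hv : ∑ k, v k = Fintype.card ι) :
    #{c : ι → κ | fiberCard c = v} = multinomial univ v := by
  obtain ⟨c₀, hc₀⟩ := exists_fiberCard_eq hv
  have hstab : Fintype.card {g : Equiv.Perm ι // c₀ ∘ g = c₀} = ∏ k, (v k)! := by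
    rw [DomMulAct.stabilizer_card]
    exact prod_congr rfl fun k _ => by rw [← fiberCard_eq_card_subtype, hc₀]
  have hfiber : ∀ c ∈ ({c : ι → κ | fiberCard c = v} : Finset _),
      #{g : Equiv.Perm ι | c₀ ∘ g = c} = ∏ k, (v k)! := by
    intro c hc
    obtain ⟨g₀, hg₀⟩ :=
      exists_perm_comp_eq_of_fiberCard_eq ((mem_filter.mp hc).2.trans hc₀.symm)
    rw [← hstab, ← card_perm_comp_eq_card_stabilizer hg₀, Fintype.card_subtype]
  have horbit : #{c : ι → κ | fiberCard c = v} * ∏ k, (v k)! = (Fintype.card ι)! :=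
    calc #{c : ι → κ | fiberCard c = v} * ∏ k, (v k)!
        = ∑ c ∈ ({c : ι → κ | fiberCard c = v} : Finset _),
            #{g : Equiv.Perm ι | c₀ ∘ g = c} := by
          rw [sum_congr rfl hfiber, sum_const, smul_eq_mul]
      _ = Fintype.card (Equiv.Perm ι) :=
          (card_eq_sum_card_fiberwise fun g _ => by simp [fiberCard_comp_perm, hc₀]).symm
      _ = (Fintype.card ι)! := Fintype.card_perm
  apply Nat.eq_of_mul_eq_mul_right (prod_pos fun k _ => factorial_pos (v k))
  rw [horbit, mul_comm, multinomial_spec, hv]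

lemma sum_comp_fiberCard [Fintype κ] [DecidableEq ι] {M : Type*} [AddCommMonoid M]
    (F : (κ → ℕ) → M) :
    ∑ c : ι → κ, F (fiberCard c) =
      ∑ v ∈ piAntidiag univ (Fintype.card ι), multinomial univ v • F v := by
  rw [← sum_fiberwise_of_maps_to (t := piAntidiag univ (Fintype.card ι)) (g := fiberCard)
    fun c _ => mem_piAntidiag.mpr ⟨sum_fiberCard c, by simp⟩]
  refine sum_congr rfl fun v hv => ?_
  rw [← card_fiberCard_eq_multinomial (mem_piAntidiag.mp hv).1, ← sum_const]
  exact sum_congr rfl fun c hc => by rw [(mem_filter.mp hc).2]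

lemma card_filter_forall_perm_apply_eq [Fintype κ] {α : Type*} [Fintype α] [DecidableEq α]
    (c : ι → κ) {f g : ι → α} (hf : Injective f) (hg : Injective g) :
    #{σ : κ → Equiv.Perm α | ∀ i, σ (c i) (g i) = f i} =
      ∏ k, (Fintype.card α - fiberCard c k)! := by
  have hpi : ({σ | ∀ i, σ (c i) (g i) = f i} : Finset (κ → Equiv.Perm α)) =
      Fintype.piFinset fun k =>
        {τ : Equiv.Perm α | τ ∘ (g ∘ Subtype.val) = f ∘ Subtype.val (p := (c · = k))} := by
    ext σ
    simp only [mem_filter, mem_univ, true_and, Fintype.mem_piFinset, funext_iff, comp_apply,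
      Subtype.forall]
    exact ⟨fun h k i hi => hi ▸ h i, fun h i => h _ i rfl⟩
  rw [hpi, Fintype.card_piFinset]
  refine prod_congr rfl fun k _ => ?_
  rw [← Fintype.card_subtype, fiberCard_eq_card_subtype,
    card_perm_comp_eq_of_injective (hf.comp Subtype.val_injective) (hg.comp Subtype.val_injective)]

end FiberCard

lemma card_fin_embedding (m n : ℕ) : Fintype.card (Fin m ↪ Fin n) = m ! * n.choose m := by
  rw [Fintype.card_embedding_eq, Fintype.card_fin, Fintype.card_fin,
    descFactorial_eq_factorial_mul_choose]

lemma prod_sumPermMatrices_apply (n m r : ℕ) (σ : Fin r → Equiv.Perm (Fin n))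
    (f g : Fin m → Fin n) :
    ∏ i, sumPermMatrices n r σ (f i) (g i) =
      ∑ c : Fin m → Fin r, if ∀ i, σ (c i) (g i) = f i then 1 else 0 := by
  simp only [sumPermMatrices, permMatrix, Matrix.sum_apply, Fintype.prod_sum, prod_boole,
    mem_univ, true_implies]

lemma sum_prod_sumPermMatrices_apply (n m r : ℕ) (f g : Fin m ↪ Fin n) :
    ∑ σ : Fin r → Equiv.Perm (Fin n), ∏ i, sumPermMatrices n r σ (f i) (g i) =
      ∑ c : Fin m → Fin r, ∏ k, ((n - fiberCard c k)! : ℚ) := by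
  simp only [prod_sumPermMatrices_apply]
  rw [sum_comm]
  refine sum_congr rfl fun c _ => ?_
  rw [sum_boole, ← Nat.cast_prod, Nat.cast_inj]
  -- `convert` reconciles the `Fin`-specific decidability instance of `∀ i : Fin m, _`
  convert card_filter_forall_perm_apply_eq c f.injective g.injective
  simp

theorem expectation_permSum_general (n m r : ℕ) :
    (1 / ((n.factorial : ℚ)) ^ r) *
        ∑ σ : Fin r → Equiv.Perm (Fin n), permSum n m (sumPermMatrices n r σ) =
      (1 / ((n.factorial : ℚ)) ^ r) * (n.choose m : ℚ) ^ 2 * (m.factorial : ℚ) *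
        ∑ v ∈ Finset.Nat.antidiagonalTuple r m,
          ((m.factorial : ℚ) / ∏ i, ((v i).factorial : ℚ)) *
            ∏ i, ((n - v i).factorial : ℚ) := by
  have hsum : ∑ σ : Fin r → Equiv.Perm (Fin n), permSum n m (sumPermMatrices n r σ) =
      (m ! * n.choose m : ℚ) ^ 2 * (∑ c : Fin m → Fin r, ∏ k, ((n - fiberCard c k)! : ℚ)) / m ! := by
    simp only [permSum, ← sum_div]
    rw [sum_comm]
    simp only [sum_comm (s := univ (α := Fin r → Equiv.Perm (Fin n))),
      sum_prod_sumPermMatrices_apply, sum_const, nsmul_eq_mul]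
    rw [Finset.card_univ, card_fin_embedding]
    push_cast
    ring
  have hmultinomial : ∀ v ∈ Finset.Nat.antidiagonalTuple r m,
      (multinomial univ v : ℚ) = m ! / ∏ i, ((v i)! : ℚ) := by
    intro v hv
    rw [eq_div_iff (by positivity), mul_comm]
    exact_mod_cast (Finset.Nat.mem_antidiagonalTuple.mp hv) ▸ multinomial_spec univ v
  rw [hsum, sum_comp_fiberCard (fun v => ∏ k, ((n - v k)! : ℚ)), Fintype.card_fin,
    piAntidiag_univ_fin_eq_antidiagonalTuple,
    sum_congr rfl fun v hv => by rw [nsmul_eq_mul, hmultinomial v hv]]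
  field_simp

theorem expectation_permSum (n m r : ℕ) (hm : m ≤ n) :
    (1 / ((n.factorial : ℚ)) ^ r) *
        ∑ σ : Fin r → Equiv.Perm (Fin n), permSum n m (sumPermMatrices n r σ) =
      (1 / ((n.factorial : ℚ)) ^ r) * (n.choose m : ℚ) ^ 2 * (m.factorial : ℚ) *
        ∑ v ∈ Finset.Nat.antidiagonalTuple r m,
          ((m.factorial : ℚ) / ∏ i, ((v i).factorial : ℚ)) *
            ∏ i, ((n - v i).factorial : ℚ) :=
  expectation_permSum_general n m r
end

section
/- With m = pn, m' = qn, a = nq(1−p)^2 r/(r−p), b = n(1−p)(r−1)pq/(r−p), d = n(r−1)^2 p^2 q/(r(r−p)), e = npq/r, and L = (1−q)^2 r^2/(q(r−q)), the equation (n − m − a − b)^2 = L·(a/r)·(n − (m + a + 2b + d)/r) holds. -/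
theorem stationarity_a (n p q : ℝ) (r : ℕ) (hn : 0 < n) (hr : 2 ≤ r)
    (hp0 : 0 < p) (hp1 : p < 1) (hq0 : 0 < q) (hq1 : q < 1)
    (hpr : p < r) (hqr : q < r)
    (m m' a b d e L : ℝ)
    (hm : m = p * n) (hm' : m' = q * n)
    (ha : a = n * q * (1 - p) ^ 2 * r / (r - p))
    (hb : b = n * (1 - p) * (r - 1) * p * q / (r - p))
    (hd : d = n * (r - 1) ^ 2 * p ^ 2 * q / (r * (r - p)))
    (he : e = n * p * q / r)
    (hL : L = (1 - q) ^ 2 * r ^ 2 / (q * (r - q))) :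
    (n - m - a - b) ^ 2 = L * (a / r) * (n - (m + a + 2 * b + d) / r) := by
  have hrp : (r : ℝ) - p ≠ 0 := ne_of_gt (by linarith)
  have hrq : (r : ℝ) - q ≠ 0 := ne_of_gt (by linarith)
  have hr0 : (r : ℝ) ≠ 0 := by positivity
  have hq : q ≠ 0 := ne_of_gt hq0
  subst hm hm' ha hb hd he hL
  field_simp
  ring
end

section
/- With m = pn, m' = qn, a = nq(1−p)^2 r/(r−p), b = n(1−p)(r−1)pq/(r−p), d = n(r−1)^2 p^2 q/(r(r−p)), e = npq/r, and L = (1−q)^2 r^2/(q(r−q)), the equation (n − m − a − b)·((m − e − b − d)/r) = L·(b/(r(r−1)))·(n − (m + a + 2b + d)/r) holds. -/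
theorem stationarity_b (n p q : ℝ) (r : ℕ) (hn : 0 < n) (hr : 2 ≤ r)
    (hp0 : 0 < p) (hp1 : p < 1) (hq0 : 0 < q) (hq1 : q < 1)
    (hpr : p < r) (hqr : q < r)
    (m m' a b d e L : ℝ)
    (hm : m = p * n) (hm' : m' = q * n)
    (ha : a = n * q * (1 - p) ^ 2 * r / (r - p))
    (hb : b = n * (1 - p) * (r - 1) * p * q / (r - p))
    (hd : d = n * (r - 1) ^ 2 * p ^ 2 * q / (r * (r - p)))
    (he : e = n * p * q / r)
    (hL : L = (1 - q) ^ 2 * r ^ 2 / (q * (r - q))) :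
    (n - m - a - b) * ((m - e - b - d) / r) = L * (b / (r * (r - 1))) * (n - (m + a + 2 * b + d) / r) := by
  have hrR : (2:ℝ) ≤ (r:ℝ) := by exact_mod_cast hr
  have hr0 : (r:ℝ) ≠ 0 := by linarith
  have hr1 : (r:ℝ) - 1 ≠ 0 := by linarith
  have hrp : (r:ℝ) - p ≠ 0 := by linarith
  have hrq : (r:ℝ) - q ≠ 0 := by linarith
  have hq0' : q ≠ 0 := ne_of_gt hq0
  subst hm hm' ha hb hd he hL
  field_simp
  ring
end

section
/- With m = pn, m' = qn, b = n(1−p)(r−1)pq/(r−p), d = n(r−1)^2 p^2 q/(r(r−p)), e = npq/r, and L = (1−q)^2 r^2/(q(r−q)), the equation ((m − e − b − d)/r)^2 = L·((m−e)/r)·(e/r) holds. -/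
theorem stationarity_e (n p q : ℝ) (r : ℕ) (hn : 0 < n) (hr : 2 ≤ r)
    (hp0 : 0 < p) (hp1 : p < 1) (hq0 : 0 < q) (hq1 : q < 1)
    (hpr : p < r) (hqr : q < r)
    (m m' a b d e L : ℝ)
    (hm : m = p * n) (hm' : m' = q * n)
    (ha : a = n * q * (1 - p) ^ 2 * r / (r - p))
    (hb : b = n * (1 - p) * (r - 1) * p * q / (r - p))
    (hd : d = n * (r - 1) ^ 2 * p ^ 2 * q / (r * (r - p)))
    (he : e = n * p * q / r)
    (hL : L = (1 - q) ^ 2 * r ^ 2 / (q * (r - q))) :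
    ((m - e - b - d) / r) ^ 2 = L * ((m - e) / r) * (e / r) := by
  subst hm hb hd he hL
  have hr0 : (r:ℝ) ≠ 0 := by positivity
  have h1 : (r:ℝ) - p ≠ 0 := by linarith
  have h2 : (r:ℝ) - q ≠ 0 := by linarith
  field_simp
  ring
end

section
/- Define F(z) = z ln z − z (with F(0)=0). With m = pn, m' = qn, a = nq(1−p)^2 r/(r−p), b = n(1−p)(r−1)pq/(r−p), d = n(r−1)^2 p^2 q/(r(r−p)), e = npq/r, and S = LM + LA + LE + 2LB + LD + LT where LM = −rF(n) + 2F(n) − 2F(n−m) − rF(m/r), LA = 2F(n−m) − 2F(n−m−a) − rF(a/r), LE = rF(m/r) − rF((m−e)/r) − rF(e/r), LB = F(n−m−a) − F(n−m−a−b) − r(r−1)F(b/(r(r−1))) + rF((m−e)/r) − rF((m−e−b)/r), LD = 2rF((m−e−b)/r) − 2r(r−1)F(d/(r(r−1))) + rF(d/r) − 2rF((m−e−b−d)/r), LT = rF(n − (m+a+2b+d)/r), then S/n = [−p ln p + (2p−r) ln r + 2(p−1) ln(1−p) + (r−p) ln(r−p)] + [−q ln q + (2q−r) ln r + 2(q−1)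 ln(1−q) + (r−q) ln(r−q)]. -/
/-! After the cancellations of the intermediate terms, `S` is a combination `∑ cᵢ F(n xᵢ)` of ten
values of `F` whose arguments factor as `n` times monomials in `p, q, 1 - p, 1 - q, r, r - 1, r - p,
r - q`. Since `F(n x) = n F(x) + n x log n` and the weights balance, `∑ cᵢ xᵢ = 0`, the quotient
`S / n = ∑ cᵢ F(xᵢ)` does not depend on `n`; expanding the logarithms of the monomials and
collecting coefficients gives the two entropy-like expressions in `p` and in `q`. -/

theorem S_over_n_general (n p q : ℝ) (r : ℕ) (hn : 0 < n) (hr : 2 ≤ r)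
    (hp0 : 0 < p) (hp1 : p < 1) (hq0 : 0 < q) (hq1 : q < 1)
    (F : ℝ → ℝ) (hF : ∀ z, F z = z * Real.log z - z)
    (m a b d e : ℝ)
    (hm : m = p * n)
    (ha : a = n * q * (1 - p) ^ 2 * r / (r - p))
    (hb : b = n * (1 - p) * (r - 1) * p * q / (r - p))
    (hd : d = n * (r - 1) ^ 2 * p ^ 2 * q / (r * (r - p)))
    (he : e = n * p * q / r)
    (LM LA LE LB LD LT S : ℝ)
    (hLM : LM = -(r : ℝ) * F n + 2 * F n - 2 * F (n - m) - r * F (m / r))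
    (hLA : LA = 2 * F (n - m) - 2 * F (n - m - a) - r * F (a / r))
    (hLE : LE = r * F (m / r) - r * F ((m - e) / r) - r * F (e / r))
    (hLB : LB = F (n - m - a) - F (n - m - a - b) - r * (r - 1) * F (b / (r * (r - 1)))
      + r * F ((m - e) / r) - r * F ((m - e - b) / r))
    (hLD : LD = 2 * r * F ((m - e - b) / r) - 2 * r * (r - 1) * F (d / (r * (r - 1)))
      + r * F (d / r) - 2 * r * F ((m - e - b - d) / r))
    (hLT : LT = r * F (n - (m + a + 2 * b + d) / r))
    (hS : S = LM + LA + LE + 2 * LB + LD + LT) :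
    S / n =
      (-p * Real.log p + (2 * p - r) * Real.log r + 2 * (p - 1) * Real.log (1 - p)
          + (r - p) * Real.log (r - p)) +
      (-q * Real.log q + (2 * q - r) * Real.log r + 2 * (q - 1) * Real.log (1 - q)
          + (r - q) * Real.log (r - q)) := by
  have hr' : (2 : ℝ) ≤ r := by exact_mod_cast hr
  have hr1 : (0 : ℝ) < r - 1 := by linarith
  have hrp : (0 : ℝ) < r - p := by linarith
  have hrq : (0 : ℝ) < r - q := by linarith
  have h1p : 0 < 1 - p := by linarith
  have h1q : 0 < 1 - q := by linarith
  have hS_telescoped : S = (2 - r) * F n - r * F (a / r) + r * F ((m - e) / r) - r * F (e / r)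
      - 2 * F (n - m - a - b) - 2 * r * (r - 1) * F (b / (r * (r - 1)))
      - 2 * r * (r - 1) * F (d / (r * (r - 1))) + r * F (d / r)
      - 2 * r * F ((m - e - b - d) / r) + r * F (n - (m + a + 2 * b + d) / r) := by
    rw [hS, hLM, hLA, hLE, hLB, hLD, hLT]; ring
  have hme : m - e = n * p * (r - q) / r := by rw [hm, he]; field_simp
  have hmab : n - m - a - b = n * (1 - p) * (1 - q) := by rw [hm, ha, hb]; field_simp; ring
  have hmebd : m - e - b - d = n * p * (1 - q) := by rw [hm, he, hb, hd]; field_simp; ring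
  have hrest : n - (m + a + 2 * b + d) / r = n * (r - p) * (r - q) / r ^ 2 := by
    rw [hm, ha, hb, hd]; field_simp; ring
  rw [hS_telescoped, hrest, hmebd, hme, hmab, ha, hb, hd, he]
  simp (disch := positivity) only [hF, Real.log_mul, Real.log_div, Real.log_pow]
  field_simp
  ring

theorem S_over_n (n p q : ℝ) (r : ℕ) (hn : 0 < n) (hr : 2 ≤ r)
    (hp0 : 0 < p) (hp1 : p < 1) (hq0 : 0 < q) (hq1 : q < 1) (hpq : p + q < 1)
    (hpr : p < r) (hqr : q < r)
    (F : ℝ → ℝ) (hF : ∀ z, F z = z * Real.log z - z)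
    (m m' a b d e : ℝ)
    (hm : m = p * n) (hm' : m' = q * n)
    (ha : a = n * q * (1 - p) ^ 2 * r / (r - p))
    (hb : b = n * (1 - p) * (r - 1) * p * q / (r - p))
    (hd : d = n * (r - 1) ^ 2 * p ^ 2 * q / (r * (r - p)))
    (he : e = n * p * q / r)
    (LM LA LE LB LD LT S : ℝ)
    (hLM : LM = -(r : ℝ) * F n + 2 * F n - 2 * F (n - m) - r * F (m / r))
    (hLA : LA = 2 * F (n - m) - 2 * F (n - m - a) - r * F (a / r))
    (hLE : LE = r * F (m / r) - r * F ((m - e) / r) - r * F (e / r))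
    (hLB : LB = F (n - m - a) - F (n - m - a - b) - r * (r - 1) * F (b / (r * (r - 1)))
      + r * F ((m - e) / r) - r * F ((m - e - b) / r))
    (hLD : LD = 2 * r * F ((m - e - b) / r) - 2 * r * (r - 1) * F (d / (r * (r - 1)))
      + r * F (d / r) - 2 * r * F ((m - e - b - d) / r))
    (hLT : LT = r * F (n - (m + a + 2 * b + d) / r))
    (hS : S = LM + LA + LE + 2 * LB + LD + LT) :
    S / n =
      (-p * Real.log p + (2 * p - r) * Real.log r + 2 * (p - 1) * Real.log (1 - p)
          + (r - p) * Real.log (r - p)) +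
      (-q * Real.log q + (2 * q - r) * Real.log r + 2 * (q - 1) * Real.log (1 - q)
          + (r - q) * Real.log (r - q)) :=
  S_over_n_general n p q r hn hr hp0 hp1 hq0 hq1 F hF m a b d e hm ha hb hd he LM LA LE LB LD LT S
    hLM hLA hLE hLB hLD hLT hS
end
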